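/- arXiv:2303.11719 — 2 statements merged into one kernel-verified Lean document; each statement's English description precedes it below -/
import Mathlib

section
/- For every tournament T on n ≥ 2k+1 vertices, there exists a family of at most 2k vertex subsets whose successive inversion transforms T into a k-strong tournament; that is, sinv_k(T) ≤ 2k. -/
/-- `D` is a tournament. -/
def IsTournament {V : Type*} (D : V → V → Prop) : Prop :=
  (∀ v, ¬ D v v) ∧ ∀ u v : V, u ≠ v → (D u v ↔ ¬ D v u)

/-- Inversion of the vertex set `X` in the digraph `D`. -/
def dinv {V : Type*} (D : V → V → Prop) (X : Set V) : V → V → Prop :=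
  fun u v => (u ∈ X ∧ v ∈ X ∧ D v u) ∨ (¬ (u ∈ X ∧ v ∈ X) ∧ D u v)

/-- Successive inversions of a list of vertex sets. -/
def dinvFam {V : Type*} (D : V → V → Prop) (Xs : List (Set V)) : V → V → Prop :=
  Xs.foldl dinv D

/-- `D` is `k`-strong. -/
def kStrong {V : Type*} [Fintype V] (D : V → V → Prop) (k : ℕ) : Prop :=
  k + 1 ≤ Fintype.card V ∧
  ∀ X : Set V, X.ncard ≤ k - 1 → ∀ u ∉ X, ∀ v ∉ X,
    Relation.ReflTransGen (fun a b => D a b ∧ a ∉ X ∧ b ∉ X) u v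


/-!
Fix a target tournament `G` on `Fin n`: the rotational tournament `i → i + 1, …, i + k` on the
vertices `0, …, 2k`, every other vertex beating `0, …, k - 1` and beaten by `k, …, 2k - 1`.
Inverting `{v} ∪ {x | the arc between v and x disagrees with G}` makes all arcs at `v` agree with
`G` without disturbing vertices that already agree, so `2k` inversions make `T` agree with `G` at
`0, …, 2k - 1`; every arc of `G` needed below has an end there. After deleting fewer than `k`
vertices, every vertex of the cycle still has an out-neighbour among its `k` successors, so the
cycle stays strongly connected, and each other vertex has an out-neighbour in `0, …, k - 1` and
an in-neighbour in `k, …, 2k - 1` that survive.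
-/

open Function Relation

section Inversion

variable {V : Type*} {D G : V → V → Prop}

theorem IsTournament.swap_iff (hD : IsTournament D) (hG : IsTournament G) {a : V}
    (h : ∀ b, D a b ↔ G a b) (b : V) : D b a ↔ G b a := by
  by_cases hba : b = a
  · subst hba
    exact iff_of_false (hD.1 b) (hG.1 b)
  · rw [hD.2 b a hba, hG.2 b a hba, h]

theorem dinv_iff_of_mem {X : Set V} {a b : V} (ha : a ∈ X) (hb : b ∈ X) :
    dinv D X a b ↔ D b a := by
  simp [dinv, ha, hb]

theorem dinv_iff_of_left_notMem {X : Set V} {a b : V} (ha : a ∉ X) : dinv D X a b ↔ D a b := by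
  simp [dinv, ha]

theorem dinv_iff_of_right_notMem {X : Set V} {a b : V} (hb : b ∉ X) :
    dinv D X a b ↔ D a b := by
  simp [dinv, hb]

theorem IsTournament.dinv (hD : IsTournament D) (X : Set V) : IsTournament (dinv D X) := by
  refine ⟨fun v h => ?_, fun u v huv => ?_⟩
  · rcases h with ⟨-, -, h⟩ | ⟨-, h⟩ <;> exact hD.1 v h
  · have huv' := hD.2 u v huv
    by_cases hu : u ∈ X <;> by_cases hv : v ∈ X <;> simp [_root_.dinv, hu, hv] <;> tauto

theorem IsTournament.dinvFam (hD : IsTournament D) (Xs : List (Set V)) :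
    IsTournament (dinvFam D Xs) := by
  induction Xs generalizing D with
  | nil => exact hD
  | cons X Xs ih => exact ih (hD.dinv X)

theorem dinvFam_append_singleton (Xs : List (Set V)) (X : Set V) :
    dinvFam D (Xs ++ [X]) = dinv (dinvFam D Xs) X := by
  simp [dinvFam, List.foldl_append]

theorem exists_dinv_agree_insert (hD : IsTournament D) (hG : IsTournament G) {S : Set V}
    (hS : ∀ a ∈ S, ∀ b, D a b ↔ G a b) (v : V) :
    ∃ X : Set V, ∀ a ∈ insert v S, ∀ b, dinv D X a b ↔ G a b := by
  refine ⟨insert v {x | ¬(D v x ↔ G v x)}, fun a ha b => ?_⟩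
  by_cases hav : a = v
  · subst hav
    by_cases hbX : b ∈ insert a {x | ¬(D a x ↔ G a x)}
    · rcases hbX with rfl | hbad
      · exact iff_of_false ((hD.dinv _).1 b) (hG.1 b)
      · have hba : b ≠ a := by rintro rfl; exact hbad (iff_of_false (hD.1 b) (hG.1 b))
        rw [dinv_iff_of_mem (Set.mem_insert a _) (Set.mem_insert_of_mem a hbad), hD.2 b a hba]
        exact not_iff.mp hbad
    · rw [dinv_iff_of_right_notMem hbX]
      by_contra hbad
      exact hbX (Set.mem_insert_of_mem a hbad)
  · have ha : a ∈ S := ha.resolve_left hav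
    have haX : a ∉ insert v {x | ¬(D v x ↔ G v x)} := by
      rintro (rfl | hbad)
      · exact hav rfl
      · exact hbad (hD.swap_iff hG (hS a ha) v)
    rw [dinv_iff_of_left_notMem haX]
    exact hS a ha b

theorem exists_dinvFam_agree (hD : IsTournament D) (hG : IsTournament G) (S : Finset V) :
    ∃ Xs : List (Set V), Xs.length = S.card ∧ ∀ a ∈ S, ∀ b, dinvFam D Xs a b ↔ G a b := by
  classical
  induction S using Finset.induction_on with
  | empty => exact ⟨[], rfl, by simp⟩
  | insert v S hv ih =>
    obtain ⟨Xs, hlen, hagree⟩ := ih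
    obtain ⟨X, hX⟩ := exists_dinv_agree_insert (hD.dinvFam Xs) hG (S := S) hagree v
    refine ⟨Xs ++ [X], by simp [hlen, hv], fun a ha b => ?_⟩
    rw [dinvFam_append_singleton]
    exact hX a (by simpa using ha) b

end Inversion

section Rotational

variable {V : Type*}

def rotational (k : ℕ) (a b : ZMod (2 * k + 1)) : Prop :=
  1 ≤ (b - a).val ∧ (b - a).val ≤ k

theorem isTournament_rotational (k : ℕ) : IsTournament (rotational k) := by
  refine ⟨fun v => by simp [rotational], fun a b hab => ?_⟩
  have hne : b - a ≠ 0 := sub_ne_zero.mpr hab.symm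
  have hneg : (a - b).val = 2 * k + 1 - (b - a).val := by
    rw [← neg_sub, ZMod.neg_val, if_neg hne]
  have hpos := (ZMod.val_pos (n := 2 * k + 1)).mpr hne
  have hlt := ZMod.val_lt (b - a)
  unfold rotational
  omega

theorem rotational_add {k t : ℕ} (a : ZMod (2 * k + 1)) (ht₁ : 1 ≤ t) (ht₂ : t ≤ k) :
    rotational k a (a + t) := by
  rw [rotational, add_sub_cancel_left, ZMod.val_cast_of_lt (by omega)]
  exact ⟨ht₁, ht₂⟩

theorem reflTransGen_of_forall_exists_add_mem {m k : ℕ} [NeZero m]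
    {R : ZMod m → ZMod m → Prop} (hR : ∀ a (t : ℕ), 1 ≤ t → t ≤ k → R a (a + t))
    {Y : Set (ZMod m)} (hY : ∀ a : ZMod m, ∃ t : ℕ, 1 ≤ t ∧ t ≤ k ∧ a + t ∈ Y) {p q : ZMod m}
    (hp : p ∈ Y) (hq : q ∈ Y) : ReflTransGen (fun a b => R a b ∧ a ∈ Y ∧ b ∈ Y) p q := by
  induction hd : (q - p).val using Nat.strong_induction_on generalizing p with
  | _ d ih =>
    by_cases hdk : d ≤ k
    · have hq' : q = p + (d : ℕ) := by rw [← hd, ZMod.natCast_zmod_val, add_sub_cancel]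
      rcases Nat.eq_zero_or_pos d with rfl | hd₀
      · rw [hq', Nat.cast_zero, add_zero]
      · exact .single ⟨hq' ▸ hR p d hd₀ hdk, hp, hq⟩
    · obtain ⟨t, ht₁, htk, hpt⟩ := hY p
      have htd : ((t : ℕ) : ZMod m).val = t := ZMod.val_cast_of_lt (by
        have := ZMod.val_lt (q - p); omega)
      have hdist : (q - (p + t)).val = d - t := by
        rw [← sub_sub, ZMod.val_sub (by omega), hd, htd]
      exact .head ⟨hR p t ht₁ htk, hp, hpt⟩ (ih (d - t) (by omega) hpt hdist)

theorem exists_lt_add_notMem [Finite V] {m k : ℕ} [NeZero m] {f : ZMod m → V}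
    (hf : Injective f) {X : Set V} (hX : X.ncard < k) (hkm : k ≤ m) (a : ZMod m) :
    ∃ t < k, f (a + t) ∉ X := by
  classical
  have hinj : Set.InjOn (fun t : ℕ => f (a + t)) (Finset.range k) := by
    intro t₁ ht₁ t₂ ht₂ h
    have h' := congrArg ZMod.val (add_left_cancel (hf h))
    simp only [Finset.coe_range, Set.mem_Iio] at ht₁ ht₂
    rwa [ZMod.val_cast_of_lt (by omega), ZMod.val_cast_of_lt (by omega)] at h'
  have hcard : X.ncard < ((Finset.range k).image fun t : ℕ => f (a + t) : Set V).ncard := by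
    rwa [Set.ncard_coe_finset, Finset.card_image_of_injOn hinj, Finset.card_range]
  obtain ⟨x, hx, hxX⟩ := Set.exists_mem_notMem_of_ncard_lt_ncard hcard
  simp only [Finset.coe_image, Finset.coe_range, Set.mem_image, Set.mem_Iio] at hx
  obtain ⟨t, ht, rfl⟩ := hx
  exact ⟨t, ht, hxX⟩

theorem kStrong_of_rotational [Fintype V] {D : V → V → Prop} {k : ℕ} (hk : 0 < k)
    {f : ZMod (2 * k + 1) → V} (hf : Injective f)
    (hrot : ∀ a (t : ℕ), 1 ≤ t → t ≤ k → D (f a) (f (a + t)))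
    (hin : ∀ w ∉ Set.range f, ∀ t : ℕ, t < k → D w (f t))
    (hout : ∀ w ∉ Set.range f, ∀ t : ℕ, t < k → D (f (k + t)) w) : kStrong D k := by
  refine ⟨?_, fun X hX u hu v hv => ?_⟩
  · have := Fintype.card_le_of_injective f hf
    rw [ZMod.card] at this
    omega
  have hXk : X.ncard < k := by omega
  set R : V → V → Prop := fun a b => D a b ∧ a ∉ X ∧ b ∉ X
  have hcycle : ∀ p q, f p ∉ X → f q ∉ X → ReflTransGen R (f p) (f q) := by
    intro p q hp hq
    refine ReflTransGen.lift f (fun _ _ h => h) _ _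
      (reflTransGen_of_forall_exists_add_mem (R := fun a b => D (f a) (f b)) (Y := f ⁻¹' Xᶜ)
        hrot (fun a => ?_) hp hq)
    obtain ⟨t, ht, htX⟩ := exists_lt_add_notMem hf hXk (by omega) (a + 1)
    have hshift : a + ((t + 1 : ℕ) : ZMod (2 * k + 1)) = a + 1 + t := by push_cast; ring
    exact ⟨t + 1, by omega, ht, by rwa [Set.mem_preimage, hshift]⟩
  obtain ⟨p, hp, hup⟩ : ∃ p, f p ∉ X ∧ ReflTransGen R u (f p) := by
    by_cases hu' : u ∈ Set.range f
    · obtain ⟨p, rfl⟩ := hu'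
      exact ⟨p, hu, .refl⟩
    · obtain ⟨t, ht, htX⟩ := exists_lt_add_notMem hf hXk (by omega) 0
      rw [zero_add] at htX
      exact ⟨t, htX, .single ⟨hin u hu' t ht, hu, htX⟩⟩
  obtain ⟨q, hq, hqv⟩ : ∃ q, f q ∉ X ∧ ReflTransGen R (f q) v := by
    by_cases hv' : v ∈ Set.range f
    · obtain ⟨q, rfl⟩ := hv'
      exact ⟨q, hv, .refl⟩
    · obtain ⟨t, ht, htX⟩ := exists_lt_add_notMem hf hXk (by omega) k
      exact ⟨k + t, htX, .single ⟨hout v hv' t ht, htX, hv⟩⟩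
  exact hup.trans ((hcycle p q hp hq).trans hqv)

end Rotational

section RotationalExtension

variable {n k : ℕ}

def rotationalExtension (n k : ℕ) (a b : Fin n) : Prop :=
  if a.val < 2 * k + 1 ∧ b.val < 2 * k + 1 then rotational k a.val b.val
  else if b.val < 2 * k + 1 then b.val < k
  else if a.val < 2 * k + 1 then k ≤ a.val
  else a < b

theorem isTournament_rotationalExtension (n k : ℕ) : IsTournament (rotationalExtension n k) := by
  refine ⟨fun v => ?_, fun a b hab => ?_⟩
  · by_cases hv : v.val < 2 * k + 1 <;>
      simp [rotationalExtension, hv, (isTournament_rotational k).1]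
  · have hval : a.val ≠ b.val := Fin.val_ne_of_ne hab
    by_cases ha : a.val < 2 * k + 1 <;> by_cases hb : b.val < 2 * k + 1
    · have hcast : (a.val : ZMod (2 * k + 1)) ≠ b.val := fun h => hval (by
        simpa [ZMod.val_cast_of_lt ha, ZMod.val_cast_of_lt hb] using congrArg ZMod.val h)
      simpa [rotationalExtension, ha, hb] using (isTournament_rotational k).2 _ _ hcast
    all_goals
      simp only [rotationalExtension, ha, hb, and_false, false_and, if_false, if_true,
        Fin.lt_def]
      omega

def cycleVertex (hn : 2 * k + 1 ≤ n) (x : ZMod (2 * k + 1)) : Fin n :=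
  ⟨x.val, (ZMod.val_lt x).trans_le hn⟩

@[simp]
theorem val_cycleVertex (hn : 2 * k + 1 ≤ n) (x : ZMod (2 * k + 1)) :
    (cycleVertex hn x).val = x.val := rfl

theorem cycleVertex_injective (hn : 2 * k + 1 ≤ n) : Injective (cycleVertex hn) :=
  fun x y h => ZMod.val_injective _ (by simpa using congrArg Fin.val h)

theorem le_val_of_notMem_range_cycleVertex {hn : 2 * k + 1 ≤ n} {w : Fin n}
    (hw : w ∉ Set.range (cycleVertex hn)) : 2 * k + 1 ≤ w.val := by
  by_contra! hw'
  exact hw ⟨w.val, Fin.ext (ZMod.val_cast_of_lt hw')⟩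

theorem rotationalExtension_cycleVertex (hn : 2 * k + 1 ≤ n) (x y : ZMod (2 * k + 1)) :
    rotationalExtension n k (cycleVertex hn x) (cycleVertex hn y) ↔ rotational k x y := by
  simp only [rotationalExtension, val_cycleVertex, ZMod.val_lt, and_self, if_true,
    ZMod.natCast_zmod_val]

theorem rotationalExtension_of_le_left {a b : Fin n} (ha : 2 * k + 1 ≤ a.val)
    (hb : b.val < 2 * k + 1) : rotationalExtension n k a b ↔ b.val < k := by
  simp only [rotationalExtension, hb, if_true]
  rw [if_neg (by omega)]

theorem rotationalExtension_of_le_right {a b : Fin n} (ha : a.val < 2 * k + 1)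
    (hb : 2 * k + 1 ≤ b.val) : rotationalExtension n k a b ↔ k ≤ a.val := by
  simp only [rotationalExtension, ha, if_true]
  rw [if_neg (by omega), if_neg (by omega)]

theorem kStrong_of_agree_rotationalExtension (hk : 0 < k) (hn : 2 * k + 1 ≤ n)
    {D : Fin n → Fin n → Prop} (hD : IsTournament D)
    (hagree : ∀ a : Fin n, a.val < 2 * k → ∀ b, D a b ↔ rotationalExtension n k a b) :
    kStrong D k := by
  have hDG : ∀ a b : Fin n, a.val < 2 * k ∨ b.val < 2 * k →
      (D a b ↔ rotationalExtension n k a b) := by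
    rintro a b (ha | hb)
    · exact hagree a ha b
    · exact hD.swap_iff (isTournament_rotationalExtension n k) (hagree b hb) a
  apply kStrong_of_rotational hk (cycleVertex_injective hn)
  · intro a t ht₁ htk
    have hat : (a + t).val ≠ a.val := fun h => by
      have := congrArg ZMod.val (add_eq_left.mp (ZMod.val_injective _ h))
      rw [ZMod.val_cast_of_lt (by omega), ZMod.val_zero] at this
      omega
    have ha := ZMod.val_lt a
    have hat' := ZMod.val_lt (a + (t : ZMod (2 * k + 1)))
    rw [hDG _ _ (by simp only [val_cycleVertex]; omega), rotationalExtension_cycleVertex]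
    exact rotational_add a ht₁ htk
  · intro w hw t ht
    have htv : ((t : ℕ) : ZMod (2 * k + 1)).val = t := ZMod.val_cast_of_lt (by omega)
    rw [hDG _ _ (Or.inr (by rw [val_cycleVertex, htv]; omega)),
      rotationalExtension_of_le_left (le_val_of_notMem_range_cycleVertex hw)
        (by rw [val_cycleVertex, htv]; omega), val_cycleVertex, htv]
    exact ht
  · intro w hw t ht
    have htv : ((k : ZMod (2 * k + 1)) + (t : ZMod (2 * k + 1))).val = k + t := by
      rw [← Nat.cast_add, ZMod.val_cast_of_lt (by omega)]
    rw [hDG _ _ (Or.inl (by rw [val_cycleVertex, htv]; omega)),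
      rotationalExtension_of_le_right (by rw [val_cycleVertex, htv]; omega)
        (le_val_of_notMem_range_cycleVertex hw), val_cycleVertex, htv]
    omega

end RotationalExtension

/-- Every tournament on `n ≥ 2k+1` vertices can be made `k`-strong by inverting at most `2k`
vertex sets: `sinv_k(T) ≤ 2k`. -/
theorem stmt_16 (n k : ℕ) (hk : 0 < k) (hn : 2 * k + 1 ≤ n)
    (T : Fin n → Fin n → Prop) (hT : IsTournament T) :
    ∃ Xs : List (Set (Fin n)), Xs.length ≤ 2 * k ∧ kStrong (dinvFam T Xs) k := by
  obtain ⟨Xs, hlen, hagree⟩ := exists_dinvFam_agree hT (isTournament_rotationalExtension n k)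
    (Finset.univ.filter fun a : Fin n => a.val < 2 * k)
  refine ⟨Xs, ?_, kStrong_of_agree_rotationalExtension hk hn (hT.dinvFam Xs)
    fun a ha => hagree a (by simpa using ha)⟩
  rw [hlen, Fin.card_filter_val_lt]
  exact min_le_right n (2 * k)
end

section
/- There exists a tournament T of order 4k-2 that cannot be made k-arc-strong by a single inversion: explicitly, if V(T) partitions into A and B, each inducing an eulerian tournament of order 2k-1, with all arcs between them going from A to B, then for every vertex subset X, Inv(T;X) is not k-arc-strong. -/
/-- Number of arcs of `D` leaving the set `S`. -/
noncomputable def outCut {V : Type*} (D : V → V → Prop) (S : Set V) : ℕ :=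
  {p : V × V | p.1 ∈ S ∧ p.2 ∉ S ∧ D p.1 p.2}.ncard

/-- `D` is `k`-arc-strong. -/
def kArcStrong {V : Type*} (D : V → V → Prop) (k : ℕ) : Prop :=
  ∀ S : Set V, S.Nonempty → S ≠ Set.univ → k ≤ outCut D S

/-!
Take two copies `A` and `B` of the rotational tournament on `ℤ/(2k-1)` (`i → i+1, …, i+k-1`),
which is eulerian of degree `k - 1`, and add every arc from `A` to `B`. Inverting `X` leaves the
arcs at a vertex outside `X` unchanged. So if some `b ∈ B` lies outside `X`, then `{b}` has
only `k - 1` out-arcs; if some `a ∈ A` lies outside `X`, then only the `k - 1` in-arcs of `a`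
leave the complement of `{a}`; and if `X` is everything, all arcs between `A` and `B` now enter
`A`.
-/

open Set Function

section Inversion

variable {V : Type*} {D : V → V → Prop} {X : Set V}

lemma dinv_iff_of_left_notMem_s18 {u : V} (hu : u ∉ X) (w : V) : dinv D X u w ↔ D u w := by
  simp [dinv, hu]

lemma dinv_iff_of_right_notMem_s18 {v : V} (hv : v ∉ X) (w : V) : dinv D X w v ↔ D w v := by
  simp [dinv, hv]

lemma dinv_univ (u v : V) : dinv D univ u v ↔ D v u := by
  simp [dinv]

end Inversion

section OutCut

variable {V : Type*} {D : V → V → Prop}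

lemma outCut_eq_zero {S : Set V} (h : ∀ u ∈ S, ∀ v ∉ S, ¬ D u v) : outCut D S = 0 := by
  have hempty : {p : V × V | p.1 ∈ S ∧ p.2 ∉ S ∧ D p.1 p.2} = ∅ :=
    eq_empty_of_forall_notMem fun p hp => h _ hp.1 _ hp.2.1 hp.2.2
  rw [outCut, hempty, ncard_empty]

lemma outCut_singleton {v : V} (hv : ¬ D v v) : outCut D {v} = {w | D v w}.ncard := by
  suffices {p : V × V | p.1 ∈ ({v} : Set V) ∧ p.2 ∉ ({v} : Set V) ∧ D p.1 p.2} =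
      Prod.mk v '' {w | D v w} by
    rw [outCut, this, ncard_image_of_injective _ (Prod.mk_right_injective v)]
  ext ⟨u, w⟩
  simp only [mem_ofPred_eq, mem_singleton_iff, mem_image, Prod.mk.injEq]
  constructor
  · rintro ⟨rfl, -, huw⟩
    exact ⟨w, huw, rfl, rfl⟩
  · rintro ⟨w, hvw, rfl, rfl⟩
    exact ⟨rfl, fun hwv => hv (hwv ▸ hvw), hvw⟩

lemma outCut_compl_singleton {v : V} (hv : ¬ D v v) : outCut D {v}ᶜ = {w | D w v}.ncard := by
  suffices {p : V × V | p.1 ∈ ({v}ᶜ : Set V) ∧ p.2 ∉ ({v}ᶜ : Set V) ∧ D p.1 p.2} =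
      (·, v) '' {w | D w v} by
    rw [outCut, this, ncard_image_of_injective _ (Prod.mk_left_injective v)]
  ext ⟨u, w⟩
  simp only [mem_ofPred_eq, mem_compl_iff, mem_singleton_iff, not_not, mem_image, Prod.mk.injEq]
  constructor
  · rintro ⟨-, rfl, huw⟩
    exact ⟨u, huw, rfl, rfl⟩
  · rintro ⟨u, huv, rfl, rfl⟩
    exact ⟨fun huv' => hv (huv' ▸ huv), rfl, huv⟩

lemma outCut_dinv_singleton {X : Set V} {v : V} (hvX : v ∉ X) (hv : ¬ D v v) :
    outCut (dinv D X) {v} = {w | D v w}.ncard := by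
  simp only [outCut_singleton (mt (dinv_iff_of_left_notMem_s18 hvX v).1 hv),
    dinv_iff_of_left_notMem_s18 hvX]

lemma outCut_dinv_compl_singleton {X : Set V} {v : V} (hvX : v ∉ X) (hv : ¬ D v v) :
    outCut (dinv D X) {v}ᶜ = {w | D w v}.ncard := by
  simp only [outCut_compl_singleton (mt (dinv_iff_of_left_notMem_s18 hvX v).1 hv),
    dinv_iff_of_right_notMem_s18 hvX]

end OutCut

theorem not_kArcStrong_dinv {V : Type*} {D : V → V → Prop} {A B : Set V} {k : ℕ}
    (hcover : A ∪ B = univ) (hdisj : Disjoint A B) (hA : A.Nonempty) (hB : B.Nonempty)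
    (hirr : ∀ v, ¬ D v v) (hback : ∀ b ∈ B, ∀ a ∈ A, ¬ D b a)
    (hin : ∀ a ∈ A, {w ∈ A | D w a}.ncard < k) (hout : ∀ b ∈ B, {w ∈ B | D b w}.ncard < k)
    (X : Set V) : ¬ kArcStrong (dinv D X) k := by
  have mem_A_or_B (v : V) : v ∈ A ∨ v ∈ B := (mem_union v A B).1 (hcover ▸ mem_univ v)
  obtain ⟨a, ha⟩ := hA
  obtain ⟨b, hb⟩ := hB
  intro hstrong
  by_cases hX : X = univ
  · have hAne : A ≠ univ := fun h => hdisj.ne_of_mem (h ▸ mem_univ b) hb rfl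
    have hcut := hstrong A ⟨a, ha⟩ hAne
    rw [outCut_eq_zero] at hcut
    · have := hin a ha
      omega
    intro u hu v hv
    rw [hX, dinv_univ]
    exact hback v ((mem_A_or_B v).resolve_left hv) u hu
  obtain ⟨v, hv⟩ : ∃ v, v ∉ X := by simpa [eq_univ_iff_forall] using hX
  rcases mem_A_or_B v with hvA | hvB
  · have hcut := hstrong {v}ᶜ ⟨b, (hdisj.ne_of_mem hvA hb).symm⟩ (by simp)
    have hin_A : {w | D w v} = {w ∈ A | D w v} := by
      ext w
      simp only [mem_ofPred_eq, iff_and_self]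
      exact fun hwv => (mem_A_or_B w).resolve_right fun hwB => hback w hwB v hvA hwv
    rw [outCut_dinv_compl_singleton hv (hirr v), hin_A] at hcut
    have := hin v hvA
    omega
  · have hsingleton : ({v} : Set V) ≠ univ := fun h =>
      hdisj.ne_of_mem ha hvB (h ▸ mem_univ a : a ∈ ({v} : Set V))
    have hcut := hstrong {v} ⟨v, rfl⟩ hsingleton
    have hout_B : {w | D v w} = {w ∈ B | D v w} := by
      ext w
      simp only [mem_ofPred_eq, iff_and_self]
      exact fun hvw => (mem_A_or_B w).resolve_left fun hwA => hback v hvB w hwA hvw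
    rw [outCut_dinv_singleton hv (hirr v), hout_B] at hcut
    have := hout v hvB
    omega

lemma IsTournament.comap {V W : Type*} {D : W → W → Prop} (hD : IsTournament D) {f : V → W}
    (hf : Injective f) : IsTournament fun u v => D (f u) (f v) :=
  ⟨fun v => hD.1 (f v), fun _ _ huv => hD.2 _ _ (hf.ne huv)⟩

section Circulant

variable {G : Type*} [AddCommGroup G]

def circulant (S : Set G) : G → G → Prop := fun x y => y - x ∈ S

lemma isTournament_circulant {S : Set G} (h0 : 0 ∉ S) (hS : ∀ d ≠ 0, d ∈ S ↔ -d ∉ S) :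
    IsTournament (circulant S) := by
  refine ⟨fun x => by simpa [circulant] using h0, fun x y hxy => ?_⟩
  simp only [circulant, ← neg_sub y x]
  exact hS _ (sub_ne_zero.2 hxy.symm)

lemma ncard_circulant_out (S : Set G) (x : G) : {y | circulant S x y}.ncard = S.ncard :=
  ncard_preimage_of_injective_subset_range (Equiv.subRight x).injective
    fun d _ => (Equiv.subRight x).surjective d

lemma ncard_circulant_in (S : Set G) (x : G) : {y | circulant S y x}.ncard = S.ncard :=
  ncard_preimage_of_injective_subset_range (Equiv.subLeft x).injective
    fun d _ => (Equiv.subLeft x).surjective d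

end Circulant

def rotationalSet (m : ℕ) : Set (ZMod (2 * m + 1)) := ZMod.val ⁻¹' Icc 1 m

lemma isTournament_circulant_rotationalSet (m : ℕ) :
    IsTournament (circulant (rotationalSet m)) := by
  refine isTournament_circulant (by simp [rotationalSet]) fun d hd => ?_
  have : NeZero d := ⟨hd⟩
  have hpos : d.val ≠ 0 := (ZMod.val_ne_zero d).2 hd
  have hlt := ZMod.val_lt d
  simp only [rotationalSet, mem_preimage, mem_Icc, ZMod.val_neg_of_ne_zero]
  omega

lemma ncard_rotationalSet (m : ℕ) : (rotationalSet m).ncard = m := by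
  rw [rotationalSet, ncard_preimage_of_injective_subset_range (ZMod.val_injective _)]
  · simp
  · intro j hj
    exact ⟨j, ZMod.val_natCast_of_lt (by simp only [mem_Icc] at hj; omega)⟩

section Join

variable {α β : Type*}

def arcJoin (D₁ : α → α → Prop) (D₂ : β → β → Prop) : α ⊕ β → α ⊕ β → Prop
  | .inl a, .inl a' => D₁ a a'
  | .inl _, .inr _ => True
  | .inr _, .inl _ => False
  | .inr b, .inr b' => D₂ b b'

lemma isTournament_arcJoin {D₁ : α → α → Prop} {D₂ : β → β → Prop} (h₁ : IsTournament D₁)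
    (h₂ : IsTournament D₂) : IsTournament (arcJoin D₁ D₂) := by
  refine ⟨?_, ?_⟩
  · rintro (a | b)
    exacts [h₁.1 a, h₂.1 b]
  · rintro (a | b) (a' | b') hne
    · exact h₁.2 a a' (fun h => hne (h ▸ rfl))
    · simp [arcJoin]
    · simp [arcJoin]
    · exact h₂.2 b b' (fun h => hne (h ▸ rfl))

end Join

lemma ncard_sep_preimage_range {V W α : Type*} (e : V ≃ W) {f : α → W} (hf : Injective f)
    (P : W → Prop) : {w ∈ e ⁻¹' range f | P (e w)}.ncard = {x | P (f x)}.ncard := by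
  have hset : {w ∈ e ⁻¹' range f | P (e w)} = e ⁻¹' (f '' {x | P (f x)}) := by
    ext w
    constructor
    · rintro ⟨⟨x, hx⟩, hw⟩
      exact ⟨x, show P (f x) from hx ▸ hw, hx⟩
    · rintro ⟨x, hx, hxw⟩
      exact ⟨⟨x, hxw⟩, hxw ▸ hx⟩
  rw [hset, ncard_preimage_of_injective_subset_range e.injective fun y _ => e.surjective y,
    ncard_image_of_injective _ hf]

section JoinComap

variable {V α β : Type*} (e : V ≃ α ⊕ β) {D₁ : α → α → Prop} {D₂ : β → β → Prop}

lemma arcJoin_comap_of_mem_inl_of_mem_inr :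
    ∀ a ∈ e ⁻¹' range Sum.inl, ∀ b ∈ e ⁻¹' range Sum.inr, arcJoin D₁ D₂ (e a) (e b) := by
  rintro a ⟨x, hx⟩ b ⟨y, hy⟩
  rw [← hx, ← hy]
  trivial

lemma not_arcJoin_comap_of_mem_inr_of_mem_inl :
    ∀ b ∈ e ⁻¹' range Sum.inr, ∀ a ∈ e ⁻¹' range Sum.inl, ¬ arcJoin D₁ D₂ (e b) (e a) := by
  rintro b ⟨y, hy⟩ a ⟨x, hx⟩
  rw [← hx, ← hy]
  exact not_false

variable {d : ℕ}

lemma arcJoin_comap_degrees_inl (hD₁ : ∀ x, {y | D₁ x y}.ncard = d ∧ {y | D₁ y x}.ncard = d) :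
    ∀ a ∈ e ⁻¹' range Sum.inl,
      {w ∈ e ⁻¹' range Sum.inl | arcJoin D₁ D₂ (e a) (e w)}.ncard = d ∧
      {w ∈ e ⁻¹' range Sum.inl | arcJoin D₁ D₂ (e w) (e a)}.ncard = d := by
  rintro a ⟨x, hx⟩
  rw [ncard_sep_preimage_range e Sum.inl_injective,
    ncard_sep_preimage_range e Sum.inl_injective (arcJoin D₁ D₂ · (e a)), ← hx]
  exact hD₁ x

lemma arcJoin_comap_degrees_inr (hD₂ : ∀ x, {y | D₂ x y}.ncard = d ∧ {y | D₂ y x}.ncard = d) :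
    ∀ b ∈ e ⁻¹' range Sum.inr,
      {w ∈ e ⁻¹' range Sum.inr | arcJoin D₁ D₂ (e b) (e w)}.ncard = d ∧
      {w ∈ e ⁻¹' range Sum.inr | arcJoin D₁ D₂ (e w) (e b)}.ncard = d := by
  rintro b ⟨x, hx⟩
  rw [ncard_sep_preimage_range e Sum.inr_injective,
    ncard_sep_preimage_range e Sum.inr_injective (arcJoin D₁ D₂ · (e b)), ← hx]
  exact hD₂ x

end JoinComap

/-- There is a tournament `T` of order `4k-2`, with a vertex partition `(A, B)` where `T⟨A⟩`
and `T⟨B⟩` are eulerian tournaments of order `2k-1` and `A ⇒ B`, such that no single inversion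
makes `T` `k`-arc-strong. -/
theorem stmt_18 (k : ℕ) (hk : 0 < k) :
    ∃ (T : Fin (4 * k - 2) → Fin (4 * k - 2) → Prop)
      (A B : Set (Fin (4 * k - 2))),
      IsTournament T ∧
      A ∪ B = Set.univ ∧ Disjoint A B ∧
      A.ncard = 2 * k - 1 ∧ B.ncard = 2 * k - 1 ∧
      (∀ a ∈ A, {w ∈ A | T a w}.ncard = k - 1 ∧ {w ∈ A | T w a}.ncard = k - 1) ∧
      (∀ b ∈ B, {w ∈ B | T b w}.ncard = k - 1 ∧ {w ∈ B | T w b}.ncard = k - 1) ∧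
      (∀ a ∈ A, ∀ b ∈ B, T a b) ∧
      ∀ X : Set (Fin (4 * k - 2)), ¬ kArcStrong (dinv T X) k := by
  let C := circulant (rotationalSet (k - 1))
  have hC : IsTournament C := isTournament_circulant_rotationalSet (k - 1)
  have hCdeg (x) : {y | C x y}.ncard = k - 1 ∧ {y | C y x}.ncard = k - 1 :=
    ⟨(ncard_circulant_out _ x).trans (ncard_rotationalSet _),
      (ncard_circulant_in _ x).trans (ncard_rotationalSet _)⟩
  let e : Fin (4 * k - 2) ≃ ZMod (2 * (k - 1) + 1) ⊕ ZMod (2 * (k - 1) + 1) :=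
    Fintype.equivOfCardEq (by simp only [Fintype.card_fin, Fintype.card_sum, ZMod.card]; omega)
  have hT : IsTournament fun u v => arcJoin C C (e u) (e v) :=
    (isTournament_arcJoin hC hC).comap e.injective
  have hcover : e ⁻¹' range Sum.inl ∪ e ⁻¹' range Sum.inr = univ := by
    rw [← preimage_union, range_inl_union_range_inr, preimage_univ]
  have hdisj := isCompl_range_inl_range_inr.disjoint.preimage e
  have hcard {f : ZMod (2 * (k - 1) + 1) → _} (hf : Injective f) :
      (e ⁻¹' range f).ncard = 2 * k - 1 := by
    rw [ncard_preimage_of_injective_subset_range e.injective fun y _ => e.surjective y,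
      ncard_range_of_injective hf, Nat.card_zmod]
    omega
  have hdegA := arcJoin_comap_degrees_inl e (D₂ := C) hCdeg
  have hdegB := arcJoin_comap_degrees_inr e (D₁ := C) hCdeg
  have hlt : k - 1 < k := by omega
  exact ⟨_, _, _, hT, hcover, hdisj, hcard Sum.inl_injective, hcard Sum.inr_injective, hdegA,
    hdegB, arcJoin_comap_of_mem_inl_of_mem_inr e, fun X =>
      not_kArcStrong_dinv hcover hdisj ⟨e.symm (.inl 0), by simp⟩ ⟨e.symm (.inr 0), by simp⟩
        hT.1 (not_arcJoin_comap_of_mem_inr_of_mem_inl e) (fun a ha => (hdegA a ha).2.trans_lt hlt)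
        (fun b hb => (hdegB b hb).1.trans_lt hlt) X⟩
end
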